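/- arXiv:2311.07829 — 5 statements merged into one kernel-verified Lean document; each statement's English description precedes it below -/
import Mathlib

section
/- Let F be a field, let f_1,...,f_L, α_1,...,α_N be N+L pairwise distinct elements of F, and suppose L + R = N. Then the N×N Cauchy–Vandermonde matrix whose (n,ℓ) entry is 1/(f_ℓ − α_n) for ℓ ∈ [L] and whose (n, L+j) entry is α_n^{j−1} for j ∈ [R] is invertible. -/
/-!
A kernel vector `(c, d)` gives the rational function `r(x) = ∑ c_ℓ / (f_ℓ - x) + ∑ d_j x^j`
vanishing at the `N` points `α_n`. Clearing denominators with `G(x) = ∏ (x - f_ℓ)` turns `G r`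
into a polynomial of degree `< L + R = N` with `N` roots, hence zero. Evaluating it at `f_ℓ`
kills every term but `c_ℓ ∏_{k ≠ ℓ} (f_ℓ - f_k)`, so `c = 0`; then `G ∑ d_j X^j = 0` forces `d = 0`.
-/

open Polynomial Finset Lagrange

namespace Lagrange

variable {F ι : Type*} [Field F] [DecidableEq ι] {s : Finset ι} {v : ι → F}

theorem eval_nodal_erase_not_at_node {i : ι} (hi : i ∈ s) {x : F} (hx : x ≠ v i) :
    (nodal (s.erase i) v).eval x = (nodal s v).eval x / (x - v i) := by
  rw [eq_div_iff (sub_ne_zero.2 hx), eval_nodal, eval_nodal, ← mul_prod_erase _ _ hi, mul_comm]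

theorem eval_sum_smul_nodal_erase_not_at_node (c : ι → F) {x : F} (hx : ∀ i ∈ s, x ≠ v i) :
    (∑ i ∈ s, c i • nodal (s.erase i) v).eval x =
      (nodal s v).eval x * ∑ i ∈ s, c i / (x - v i) := by
  rw [eval_finsetSum, mul_sum]
  refine sum_congr rfl fun i hi => ?_
  rw [eval_smul, smul_eq_mul, eval_nodal_erase_not_at_node hi (hx i hi)]
  ring

theorem eval_sum_smul_nodal_erase_at_node (c : ι → F) {i : ι} (hi : i ∈ s) :
    (∑ j ∈ s, c j • nodal (s.erase j) v).eval (v i) =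
      c i * (nodal (s.erase i) v).eval (v i) := by
  rw [eval_finsetSum, sum_eq_single_of_mem i hi, eval_smul, smul_eq_mul]
  intro j _ hji
  rw [eval_smul, eval_nodal_at_node (mem_erase.2 ⟨hji.symm, hi⟩), smul_zero]

theorem degree_sum_smul_nodal_erase_lt (c : ι → F) :
    (∑ i ∈ s, c i • nodal (s.erase i) v).degree < #s := by
  refine (degree_sum_le _ _).trans_lt
    ((Finset.sup_lt_iff (WithBot.bot_lt_coe _)).2 fun i hi => ?_)
  refine (degree_smul_le _ _).trans_lt ?_
  rw [degree_nodal, card_erase_of_mem hi, Nat.cast_lt]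
  exact Nat.sub_lt (card_pos.2 ⟨i, hi⟩) one_pos

theorem eq_zero_of_sum_div_sub_add_eval_eq_zero (hv : Set.InjOn v s) {c : ι → F} {P : F[X]}
    {R : ℕ} (hP : P.degree < R) {T : Finset F} (hT : #s + R ≤ #T)
    (hTv : ∀ x ∈ T, ∀ i ∈ s, x ≠ v i) (h : ∀ x ∈ T, ∑ i ∈ s, c i / (v i - x) + P.eval x = 0) :
    (∀ i ∈ s, c i = 0) ∧ P = 0 := by
  set Q := nodal s v * P - ∑ i ∈ s, c i • nodal (s.erase i) v with hQ_def
  have hQ_eval : ∀ x ∈ T,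
      Q.eval x = (nodal s v).eval x * (∑ i ∈ s, c i / (v i - x) + P.eval x) := by
    intro x hx
    rw [eval_sub, eval_mul, eval_sum_smul_nodal_erase_not_at_node c (hTv x hx)]
    simp only [← neg_sub (v _) x, div_neg, sum_neg_distrib]
    ring
  have hQ_deg : Q.degree < #T := by
    have hT' : ((#s + R : ℕ) : WithBot ℕ) ≤ #T := by exact_mod_cast hT
    refine (degree_sub_le _ _).trans_lt (max_lt ?_ ?_)
    · rw [degree_mul, degree_nodal]
      refine lt_of_lt_of_le ?_ hT'
      rw [Nat.cast_add]
      exact WithBot.add_lt_add_left WithBot.coe_ne_bot hP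
    · refine (degree_sum_smul_nodal_erase_lt c).trans_le (le_trans ?_ hT')
      exact_mod_cast Nat.le_add_right _ _
  have hQ : Q = 0 := eq_zero_of_degree_lt_of_eval_finset_eq_zero T hQ_deg fun x hx => by
    rw [hQ_eval x hx, h x hx, mul_zero]
  have hc : ∀ i ∈ s, c i = 0 := by
    intro i hi
    have := congrArg (eval (v i)) hQ
    rw [eval_sub, eval_mul, eval_nodal_at_node hi, zero_mul, zero_sub,
      eval_sum_smul_nodal_erase_at_node c hi, eval_zero, neg_eq_zero] at this
    refine (mul_eq_zero.1 this).resolve_right (eval_nodal_not_at_node fun j hj hij => ?_)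
    exact (mem_erase.1 hj).1 (hv (mem_of_mem_erase hj) hi hij.symm)
  refine ⟨hc, ?_⟩
  have : nodal s v * P = 0 := by
    rwa [hQ_def, sum_eq_zero fun i hi => by rw [hc i hi, zero_smul], sub_zero] at hQ
  exact (mul_eq_zero.1 this).resolve_left nodal_ne_zero

end Lagrange

open Matrix

theorem Polynomial.eq_zero_of_sum_fin_C_mul_X_pow_eq_zero {R : Type*} [Semiring R] {n : ℕ}
    {d : Fin n → R} (h : ∑ i : Fin n, C (d i) * X ^ (i : ℕ) = 0) : d = 0 := by
  funext j
  simpa [finsetSum_coeff, coeff_C_mul_X_pow, Fin.val_inj] using congrArg (coeff · j) h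

theorem cauchyVandermonde_mulVec_eq_zero {F ι κ : Type*} [Field F] [Fintype ι] [Fintype κ]
    {R : ℕ} (hcard : Fintype.card ι + R ≤ Fintype.card κ) {f : ι → F} {α : κ → F}
    (hfα : Function.Injective (Sum.elim f α)) {M : Matrix κ (ι ⊕ Fin R) F}
    (hM : ∀ n, (∀ ℓ, M n (Sum.inl ℓ) = (f ℓ - α n)⁻¹) ∧ ∀ j, M n (Sum.inr j) = α n ^ (j : ℕ))
    {w : ι ⊕ Fin R → F} (hw : M *ᵥ w = 0) : w = 0 := by
  classical
  have hrow : ∀ n, (M *ᵥ w) n =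
      ∑ ℓ, w (.inl ℓ) / (f ℓ - α n) + (∑ j : Fin R, C (w (.inr j)) * X ^ (j : ℕ)).eval (α n) := by
    intro n
    simp only [mulVec, dotProduct, Fintype.sum_sum_type, (hM n).1, (hM n).2, eval_finsetSum,
      eval_mul, eval_C, eval_pow, eval_X, div_eq_inv_mul]
    simp only [mul_comm]
  have hα : Function.Injective α := hfα.comp Sum.inr_injective
  obtain ⟨hc, hP⟩ := Lagrange.eq_zero_of_sum_div_sub_add_eval_eq_zero
    (hfα.comp Sum.inl_injective).injOn (degree_sum_fin_lt _) (T := univ.image α)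
    (by rwa [card_image_of_injective _ hα]) (by
      simp only [mem_image, mem_univ, true_and, forall_exists_index, forall_apply_eq_imp_iff]
      exact fun n ℓ _ h => Sum.inr_ne_inl (hfα h))
    (by
      simp only [mem_image, mem_univ, true_and, forall_exists_index, forall_apply_eq_imp_iff]
      exact fun n => (hrow n).symm.trans (congrFun hw n))
  ext (ℓ | j)
  · exact hc ℓ (mem_univ ℓ)
  · exact congrFun (eq_zero_of_sum_fin_C_mul_X_pow_eq_zero hP) j

theorem stmt_0_general (F : Type*) [Field F] (L R N : ℕ)
    (hLR : L + R = N)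
    (f : Fin L → F) (α : Fin N → F)
    (hdist : Function.Injective (Sum.elim f α : Fin L ⊕ Fin N → F))
    (M : Matrix (Fin N) (Fin L ⊕ Fin R) F)
    (hM : ∀ n : Fin N, (∀ ℓ : Fin L, M n (Sum.inl ℓ) = (f ℓ - α n)⁻¹) ∧
          (∀ j : Fin R, M n (Sum.inr j) = (α n) ^ (j : ℕ))) :
    IsUnit (M.submatrix id ((finSumFinEquiv.trans (finCongr hLR)).symm :
      Fin N → Fin L ⊕ Fin R)) := by
  set e := finSumFinEquiv.trans (finCongr hLR)
  rw [← mulVec_injective_iff_isUnit, ← coe_mulVecLin, ← LinearMap.ker_eq_bot,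
    ker_mulVecLin_eq_bot_iff]
  intro v hv
  rw [submatrix_mulVec_equiv, Function.comp_id] at hv
  have hw := cauchyVandermonde_mulVec_eq_zero (by simp [hLR]) hdist hM hv
  funext m
  simpa using congrFun hw (e.symm m)

/-- Cauchy–Vandermonde N×N matrix (L Cauchy columns, R Vandermonde columns) is invertible. -/
theorem stmt_0 (F : Type*) [Field F] (L R N : ℕ) (hL : 0 < L) (hR : 0 < R)
    (hLR : L + R = N)
    (f : Fin L → F) (α : Fin N → F)
    (hdist : Function.Injective (Sum.elim f α : Fin L ⊕ Fin N → F))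
    (M : Matrix (Fin N) (Fin L ⊕ Fin R) F)
    (hM : ∀ n : Fin N, (∀ ℓ : Fin L, M n (Sum.inl ℓ) = (f ℓ - α n)⁻¹) ∧
          (∀ j : Fin R, M n (Sum.inr j) = (α n) ^ (j : ℕ))) :
    IsUnit (M.submatrix id ((finSumFinEquiv.trans (finCongr hLR)).symm :
      Fin N → Fin L ⊕ Fin R)) :=
  stmt_0_general F L R N hLR f α hdist M hM
end

section
/- Let F be a field, f_1,...,f_L, α_1,...,α_N pairwise distinct elements of F, and M the N×(L+R) Cauchy–Vandermonde matrix with entries 1/(f_ℓ − α_n) in the first L columns and α_n^{j−1} (j ∈ [R]) in the last R columns. If S ⊆ [N] is any subset of rows with |S| = L + R ≤ N, then the (L+R)×(L+R) submatrix M(S,:) is invertible. -/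
/-!
A kernel vector `(c, d)` of the Cauchy–Vandermonde rows at nodes `β i` says that the rational
function `q(x) + ∑ ℓ, c ℓ / (f ℓ - x)`, with `q = ∑ j, d j X ^ j` of degree `< R`, vanishes at
`L + R` distinct points. Clearing denominators gives a polynomial of degree `< L + R` with these
roots, hence zero; evaluating it at a pole `f ℓ` kills every term but the one carrying `c ℓ`, so
`c = 0`, and then `q = 0`.
-/

open Polynomial Lagrange Finset

section PartialFractions

variable {F ι : Type*} [Field F] [Fintype ι]

section Numerator

variable [DecidableEq ι] {f c : ι → F} {q : F[X]}

/-- The numerator of `q(x) + ∑ ℓ, c ℓ / (f ℓ - x)` over the common denominator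
`∏ ℓ, (x - f ℓ) = nodal univ f`. -/
noncomputable def partialFractionNumerator (f c : ι → F) (q : F[X]) : F[X] :=
  q * nodal univ f - ∑ ℓ, c ℓ • nodal (univ.erase ℓ) f

theorem eval_partialFractionNumerator {x : F} (hx : ∀ ℓ, x ≠ f ℓ) :
    (partialFractionNumerator f c q).eval x =
      (nodal univ f).eval x * (q.eval x + ∑ ℓ, c ℓ * (f ℓ - x)⁻¹) := by
  have eval_erase : ∀ ℓ, (nodal (univ.erase ℓ) f).eval x = (nodal univ f).eval x * (x - f ℓ)⁻¹ :=
    fun ℓ => by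
      rw [nodal_eq_mul_nodal_erase (mem_univ ℓ), eval_mul, eval_sub, eval_X, eval_C,
        mul_comm (x - f ℓ), mul_inv_cancel_right₀ (sub_ne_zero.mpr (hx ℓ))]
  simp only [partialFractionNumerator, eval_sub, eval_mul, eval_finsetSum, eval_smul, smul_eq_mul,
    eval_erase, mul_add, mul_sum]
  rw [sub_eq_add_neg, ← sum_neg_distrib]
  congr 1
  · ring
  · refine sum_congr rfl fun ℓ _ => ?_
    rw [← neg_sub, inv_neg]
    ring

theorem eval_partialFractionNumerator_node (ℓ : ι) :
    (partialFractionNumerator f c q).eval (f ℓ) =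
      -(c ℓ * (nodal (univ.erase ℓ) f).eval (f ℓ)) := by
  have vanish : ∀ k ≠ ℓ, (nodal (univ.erase k) f).eval (f ℓ) = 0 := fun k hk =>
    eval_nodal_at_node (mem_erase.mpr ⟨Ne.symm hk, mem_univ ℓ⟩)
  simp only [partialFractionNumerator, eval_sub, eval_mul, eval_finsetSum, eval_smul, smul_eq_mul,
    eval_nodal_at_node (mem_univ ℓ), mul_zero, zero_sub]
  rw [sum_eq_single ℓ (fun k _ hk => by rw [vanish k hk, mul_zero]) (by simp)]

theorem degree_partialFractionNumerator_lt {R : ℕ} (hq : q.degree < R) :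
    (partialFractionNumerator f c q).degree < (Fintype.card ι + R : ℕ) := by
  refine (degree_sub_le _ _).trans_lt (max_lt ?_ ?_)
  · rw [degree_mul, degree_nodal, card_univ, Nat.cast_add, add_comm]
    exact WithBot.add_lt_add_left (WithBot.natCast_ne_bot _) hq
  · refine (degree_sum_le _ _).trans_lt <|
      (Finset.sup_lt_iff (WithBot.bot_lt_coe _)).2 fun ℓ _ => ?_
    refine (degree_smul_le _ _).trans_lt ?_
    rw [degree_nodal]
    exact_mod_cast (card_erase_lt_of_mem (mem_univ ℓ)).trans_le (Nat.le_add_right _ R)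

theorem partialFractionNumerator_eq_zero (hf : Function.Injective f)
    (h : partialFractionNumerator f c q = 0) : c = 0 ∧ q = 0 := by
  have hc : c = 0 := funext fun ℓ => by
    have := eval_partialFractionNumerator_node (f := f) (c := c) (q := q) ℓ
    rw [h, eval_zero, eq_comm, neg_eq_zero] at this
    refine (mul_eq_zero.mp this).resolve_right (eval_nodal_not_at_node fun k hk => ?_)
    exact fun hfk => (mem_erase.mp hk).1 (hf hfk).symm
  refine ⟨hc, ?_⟩
  simpa [partialFractionNumerator, hc, nodal_ne_zero] using h

end Numerator

theorem eq_zero_of_eval_add_sum_inv_sub_eq_zero {κ : Type*} [Fintype κ] {f c : ι → F}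
    {q : F[X]} {β : κ → F} {R : ℕ}
    (hf : Function.Injective f) (hβ : Function.Injective β) (hfβ : ∀ ℓ i, f ℓ ≠ β i)
    (hq : q.degree < R) (hcard : Fintype.card ι + R ≤ Fintype.card κ)
    (h : ∀ i, q.eval (β i) + ∑ ℓ, c ℓ * (f ℓ - β i)⁻¹ = 0) : c = 0 ∧ q = 0 := by
  classical
  refine partialFractionNumerator_eq_zero hf <|
    eq_zero_of_degree_lt_of_eval_index_eq_zero univ hβ.injOn ?_ fun i _ => ?_
  · exact (degree_partialFractionNumerator_lt hq).trans_le (by exact_mod_cast hcard)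
  · rw [eval_partialFractionNumerator fun ℓ => (hfβ ℓ i).symm, h i, mul_zero]

end PartialFractions

theorem Polynomial.coeff_sum_fin_C_mul_X_pow {R : Type*} [Semiring R] {n : ℕ} (d : Fin n → R)
    (j : Fin n) : (∑ i : Fin n, C (d i) * X ^ (i : ℕ)).coeff j = d j := by
  simp [coeff_C_mul, coeff_X_pow, Fin.val_eq_val]

section CauchyVandermonde

open Matrix

variable {F ι κ : Type*} [Field F] [Fintype ι]

def cauchyVandermonde (f : ι → F) (β : κ → F) (R : ℕ) : Matrix κ (ι ⊕ Fin R) F :=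
  Matrix.of fun i => Sum.elim (fun ℓ => (f ℓ - β i)⁻¹) fun j => β i ^ (j : ℕ)

theorem cauchyVandermonde_mulVec (f : ι → F) (β : κ → F) (R : ℕ) (v : ι ⊕ Fin R → F) (i : κ) :
    (cauchyVandermonde f β R *ᵥ v) i =
      (∑ j : Fin R, C (v (.inr j)) * X ^ (j : ℕ)).eval (β i) +
        ∑ ℓ, v (.inl ℓ) * (f ℓ - β i)⁻¹ := by
  simp only [cauchyVandermonde, mulVec, dotProduct, of_apply, Fintype.sum_sum_type, Sum.elim_inl,
    Sum.elim_inr, eval_finsetSum, eval_mul, eval_C, eval_pow, eval_X]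
  rw [add_comm]
  simp only [mul_comm]

theorem cauchyVandermonde_mulVec_injective [Fintype κ] {f : ι → F} {β : κ → F} {R : ℕ}
    (hnodes : Function.Injective (Sum.elim f β)) (hcard : Fintype.card ι + R ≤ Fintype.card κ) :
    Function.Injective (cauchyVandermonde f β R).mulVec := by
  obtain ⟨hf, hβ, hfβ⟩ := Sum.elim_injective.mp hnodes
  rw [← coe_mulVecLin, ← LinearMap.ker_eq_bot, ker_mulVecLin_eq_bot_iff]
  intro v hv
  obtain ⟨hc, hd⟩ := eq_zero_of_eval_add_sum_inv_sub_eq_zero hf hβ hfβ (degree_sum_fin_lt _)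
    hcard fun i => by rw [← cauchyVandermonde_mulVec, hv, Pi.zero_apply]
  ext (ℓ | j)
  · exact congr_fun hc ℓ
  · simpa only [coeff_sum_fin_C_mul_X_pow, coeff_zero, Pi.zero_apply] using
      congr_arg (coeff · j) hd

theorem isUnit_cauchyVandermonde_submatrix [Fintype κ] [DecidableEq κ] {f : ι → F} {β : κ → F}
    {R : ℕ} (hnodes : Function.Injective (Sum.elim f β)) (e : κ ≃ ι ⊕ Fin R) :
    IsUnit ((cauchyVandermonde f β R).submatrix id e) := by
  refine mulVec_injective_iff_isUnit.mp ?_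
  have hcard : Fintype.card ι + R ≤ Fintype.card κ := by simp [Fintype.card_congr e]
  have : ((cauchyVandermonde f β R).submatrix id e).mulVec =
      (cauchyVandermonde f β R).mulVec ∘ fun v => v ∘ e.symm :=
    funext fun v => submatrix_mulVec_equiv _ _ _ _
  rw [this]
  exact (cauchyVandermonde_mulVec_injective hnodes hcard).comp
    e.symm.surjective.injective_comp_right

end CauchyVandermonde

theorem stmt_1_general (F : Type*) [Field F] (L R N : ℕ)
    (f : Fin L → F) (α : Fin N → F)
    (hdist : Function.Injective (Sum.elim f α : Fin L ⊕ Fin N → F))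
    (M : Matrix (Fin N) (Fin L ⊕ Fin R) F)
    (hM : ∀ n : Fin N, (∀ ℓ : Fin L, M n (Sum.inl ℓ) = (f ℓ - α n)⁻¹) ∧
          (∀ j : Fin R, M n (Sum.inr j) = (α n) ^ (j : ℕ)))
    (S : Finset (Fin N)) (hS : S.card = L + R) :
    IsUnit (M.submatrix (fun i : Fin (L + R) => ((S.orderIsoOfFin hS) i : Fin N))
      (finSumFinEquiv.symm : Fin (L + R) → Fin L ⊕ Fin R)) := by
  set s : Fin (L + R) → Fin N := fun i => S.orderIsoOfFin hS i
  have hs : Function.Injective s := Subtype.val_injective.comp (S.orderIsoOfFin hS).injective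
  have hrows : M.submatrix s id = cauchyVandermonde f (α ∘ s) R := by
    ext i (ℓ | j) <;> simp [cauchyVandermonde, hM]
  have hnodes : Function.Injective (Sum.elim f (α ∘ s)) := by
    simpa [Sum.elim_comp_map] using
      hdist.comp (Sum.map_injective.mpr ⟨Function.injective_id, hs⟩)
  simpa [← hrows] using isUnit_cauchyVandermonde_submatrix hnodes finSumFinEquiv.symm

/-- Any (L+R) rows of the N×(L+R) Cauchy–Vandermonde matrix form an invertible submatrix. -/
theorem stmt_1 (F : Type*) [Field F] (L R N : ℕ) (hL : 0 < L) (hR : 0 < R)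
    (hLR : L + R ≤ N)
    (f : Fin L → F) (α : Fin N → F)
    (hdist : Function.Injective (Sum.elim f α : Fin L ⊕ Fin N → F))
    (M : Matrix (Fin N) (Fin L ⊕ Fin R) F)
    (hM : ∀ n : Fin N, (∀ ℓ : Fin L, M n (Sum.inl ℓ) = (f ℓ - α n)⁻¹) ∧
          (∀ j : Fin R, M n (Sum.inr j) = (α n) ^ (j : ℕ)))
    (S : Finset (Fin N)) (hS : S.card = L + R) :
    IsUnit (M.submatrix (fun i : Fin (L + R) => ((S.orderIsoOfFin hS) i : Fin N))
      (finSumFinEquiv.symm : Fin (L + R) → Fin L ⊕ Fin R)) :=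
  stmt_1_general F L R N f α hdist M hM S hS
end

section
/- Let F be a field and M an N×K matrix over F (K ≤ N) such that every K×K submatrix formed by choosing K rows of M is invertible. Then every nonzero vector in the column span of M has Hamming weight at least N − K + 1. -/
/-!
If `M *ᵥ x` vanished on `K` coordinates, the corresponding `K × K` row-submatrix of `M` would
kill `x`; being invertible, it forces `x = 0`. So a nonzero codeword has fewer than `K` zero
coordinates, i.e. at least `N - K + 1` nonzero ones.
-/

open Finset Matrix

theorem Matrix.eq_zero_of_isUnit_submatrix_of_mulVec_apply_eq_zero {m n R : Type*} [Fintype n]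
    [DecidableEq n] [Semiring R] {M : Matrix m n R} {e : n → m} (he : IsUnit (M.submatrix e id))
    {x : n → R} (hx : ∀ i, (M *ᵥ x) (e i) = 0) : x = 0 :=
  mulVec_injective_of_isUnit he <| by
    rw [mulVec_zero]
    exact funext hx

theorem Matrix.card_filter_mulVec_eq_zero_lt {R : Type*} [Semiring R] [DecidableEq R] {N K : ℕ}
    {M : Matrix (Fin N) (Fin K) R}
    (hMDS : ∀ (S : Finset (Fin N)) (hS : S.card = K),
      IsUnit (M.submatrix (fun i : Fin K => ((S.orderIsoOfFin hS) i : Fin N)) id))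
    {x : Fin K → R} (hx : M *ᵥ x ≠ 0) :
    #{n | (M *ᵥ x) n = 0} < K := by
  by_contra! hK
  obtain ⟨S, hSzero, hS⟩ := exists_subset_card_eq hK
  refine hx ?_
  rw [eq_zero_of_isUnit_submatrix_of_mulVec_apply_eq_zero (hMDS S hS)
    fun i => (mem_filter.1 (hSzero (S.orderIsoOfFin hS i).2)).2, mulVec_zero]

theorem stmt_6_general (F : Type*) [Field F] [DecidableEq F] (N K : ℕ)
    (M : Matrix (Fin N) (Fin K) F)
    (hMDS : ∀ (S : Finset (Fin N)) (hS : S.card = K),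
      IsUnit (M.submatrix (fun i : Fin K => ((S.orderIsoOfFin hS) i : Fin N)) id))
    (x : Fin K → F) (hx : M.mulVec x ≠ 0) :
    N - K + 1 ≤ (Finset.univ.filter (fun n : Fin N => M.mulVec x n ≠ 0)).card := by
  have hzeros := card_filter_mulVec_eq_zero_lt hMDS hx
  have hsupport : 0 < #{n | (M *ᵥ x) n ≠ 0} := by
    obtain ⟨n, hn⟩ := Function.ne_iff.1 hx
    exact card_pos.2 ⟨n, mem_filter.2 ⟨mem_univ n, hn⟩⟩
  have hsplit := card_filter_add_card_filter_not (s := univ) fun n => (M *ᵥ x) n = 0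
  simp only [← ne_eq, card_univ, Fintype.card_fin] at hsplit
  omega

/-- If every K×K row-submatrix of an N×K matrix is invertible, then every nonzero
vector in its column span has Hamming weight at least N − K + 1. -/
theorem stmt_6 (F : Type*) [Field F] [DecidableEq F] (N K : ℕ) (hK : K ≤ N)
    (M : Matrix (Fin N) (Fin K) F)
    (hMDS : ∀ (S : Finset (Fin N)) (hS : S.card = K),
      IsUnit (M.submatrix (fun i : Fin K => ((S.orderIsoOfFin hS) i : Fin N)) id))
    (x : Fin K → F) (hx : M.mulVec x ≠ 0) :
    N - K + 1 ≤ (Finset.univ.filter (fun n : Fin N => M.mulVec x n ≠ 0)).card :=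
  stmt_6_general F N K M hMDS x hx
end

section
/- Let F be a field and M₁, M₂ be N×(N−E) matrices over F such that every (N−E)×(N−E) submatrix of rows of each M_i is invertible. Then the block-diagonal 2N×(2N−2E) matrix Diag(M₁, M₂) has rank 2N−2E, and every nonzero vector in its column span has symplectic weight at least E+1. -/
/-!
An `N × k` matrix all of whose maximal row-submatrices are invertible generates an MDS code:
a codeword vanishing on `k` coordinates is zero, because those coordinates are the image of its
message under an invertible `k × k` matrix. Hence nonzero codewords have at most `k - 1` zeros,
i.e. weight at least `N - k + 1 = E + 1`. A codeword of the block-diagonal code is a pair of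
codewords of the two blocks, one of them nonzero, and its symplectic weight dominates the weight
of each component. Injectivity of both blocks gives the rank.
-/

open Finset

namespace Matrix

variable {R K : Type*} [CommRing R] [Field K] {m : Type*}

def IsMDS [LinearOrder m] {k : ℕ} (M : Matrix m (Fin k) R) : Prop :=
  ∀ (S : Finset m) (hS : S.card = k),
    IsUnit (M.submatrix (fun i : Fin k => (S.orderIsoOfFin hS i : m)) id)

theorem fromBlocks_zero_mulVec {n m' n' : Type*} [Fintype n] [Fintype n']
    (A : Matrix m n R) (D : Matrix m' n' R) (x : n ⊕ n' → R) :
    fromBlocks A 0 0 D *ᵥ x = Sum.elim (A *ᵥ (x ∘ Sum.inl)) (D *ᵥ (x ∘ Sum.inr)) := by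
  simp [fromBlocks_mulVec]

theorem fromBlocks_zero_mulVec_injective {n m' n' : Type*} [Fintype n] [Fintype n']
    {A : Matrix m n R} {D : Matrix m' n' R} (hA : Function.Injective A.mulVec)
    (hD : Function.Injective D.mulVec) : Function.Injective (fromBlocks A 0 0 D).mulVec := by
  intro x y hxy
  rw [fromBlocks_zero_mulVec, fromBlocks_zero_mulVec] at hxy
  ext (i | i)
  · exact congrFun (hA (funext fun n => congrFun hxy (Sum.inl n))) i
  · exact congrFun (hD (funext fun n => congrFun hxy (Sum.inr n))) i

theorem rank_eq_card_of_mulVec_injective {n : Type*} [Fintype n] {A : Matrix m n K}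
    (hA : Function.Injective A.mulVec) : A.rank = Fintype.card n := by
  rw [rank, LinearMap.finrank_range_of_inj hA, Module.finrank_fintype_fun_eq_card]

theorem eq_zero_of_mulVec_eq_zero_of_isUnit_submatrix {n : Type*} [Fintype n] [DecidableEq n]
    {M : Matrix m n R} {e : n → m} (he : IsUnit (M.submatrix e id)) {v : n → R}
    (hv : ∀ i, (M *ᵥ v) (e i) = 0) : v = 0 :=
  mulVec_injective_of_isUnit he ((funext hv).trans (mulVec_zero _).symm)

namespace IsMDS

variable [LinearOrder m] {k : ℕ} {M : Matrix m (Fin k) R}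

theorem eq_zero_of_mulVec_eq_zero_on (hM : M.IsMDS) {T : Finset m} (hT : k ≤ T.card)
    {v : Fin k → R} (hv : ∀ n ∈ T, (M *ᵥ v) n = 0) : v = 0 := by
  obtain ⟨S, hST, hS⟩ := exists_subset_card_eq hT
  exact eq_zero_of_mulVec_eq_zero_of_isUnit_submatrix (hM S hS)
    fun i => hv _ (hST (S.orderIsoOfFin hS i).2)

theorem mulVec_injective [Fintype m] (hM : M.IsMDS) (hk : k ≤ Fintype.card m) :
    Function.Injective M.mulVec := by
  exact (injective_iff_map_eq_zero M.mulVecLin).2 fun v hv =>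
    hM.eq_zero_of_mulVec_eq_zero_on (T := univ) hk fun n _ => congrFun hv n

theorem card_lt_add_card_ne_zero [Fintype m] [DecidableEq R] (hM : M.IsMDS) {v : Fin k → R}
    (hv : M *ᵥ v ≠ 0) : Fintype.card m < k + #{n | (M *ᵥ v) n ≠ 0} := by
  have hzeros : #{n | (M *ᵥ v) n = 0} < k := by
    by_contra! hk
    exact hv (by simp [hM.eq_zero_of_mulVec_eq_zero_on hk fun n hn => (mem_filter.1 hn).2])
  have := card_filter_add_card_filter_not (s := univ) fun n => (M *ᵥ v) n = 0
  simp only [card_univ, ← ne_eq] at this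
  omega

end IsMDS

end Matrix

theorem card_ne_zero_le_card_pair_ne_zero {ι α β : Type*} [Fintype ι] [Zero α] [Zero β]
    [DecidableEq α] [DecidableEq β] (f : ι → α) (g : ι → β) :
    #{i | f i ≠ 0} ≤ #{i | (f i, g i) ≠ (0, 0)} ∧
      #{i | g i ≠ 0} ≤ #{i | (f i, g i) ≠ (0, 0)} :=
  ⟨card_le_card (monotone_filter_right _ fun _ _ hf hfg => hf (congrArg Prod.fst hfg)),
    card_le_card (monotone_filter_right _ fun _ _ hg hfg => hg (congrArg Prod.snd hfg))⟩

open Matrix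

theorem stmt_11_general (F : Type*) [Field F] [DecidableEq F] (N E : ℕ)
    (M₁ M₂ : Matrix (Fin N) (Fin (N - E)) F)
    (h₁ : ∀ (S : Finset (Fin N)) (hS : S.card = N - E),
      IsUnit (M₁.submatrix (fun i : Fin (N - E) => ((S.orderIsoOfFin hS) i : Fin N)) id))
    (h₂ : ∀ (S : Finset (Fin N)) (hS : S.card = N - E),
      IsUnit (M₂.submatrix (fun i : Fin (N - E) => ((S.orderIsoOfFin hS) i : Fin N)) id)) :
    (Matrix.fromBlocks M₁ 0 0 M₂).rank = 2 * N - 2 * E ∧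
    (∀ x : Fin (N - E) ⊕ Fin (N - E) → F,
      (Matrix.fromBlocks M₁ 0 0 M₂).mulVec x ≠ 0 →
      E + 1 ≤ (Finset.univ.filter (fun n : Fin N =>
        ((Matrix.fromBlocks M₁ 0 0 M₂).mulVec x (Sum.inl n),
         (Matrix.fromBlocks M₁ 0 0 M₂).mulVec x (Sum.inr n)) ≠ (0, 0))).card) := by
  have hM₁ : M₁.IsMDS := h₁
  have hM₂ : M₂.IsMDS := h₂
  have hinj := fromBlocks_zero_mulVec_injective (hM₁.mulVec_injective (by simp))
    (hM₂.mulVec_injective (by simp))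
  refine ⟨by simp only [rank_eq_card_of_mulVec_injective hinj, Fintype.card_sum,
    Fintype.card_fin]; omega, fun x hx => ?_⟩
  simp only [fromBlocks_zero_mulVec, Sum.elim_inl, Sum.elim_inr] at hx ⊢
  set c₁ := M₁ *ᵥ (x ∘ Sum.inl)
  set c₂ := M₂ *ᵥ (x ∘ Sum.inr)
  obtain ⟨hc₁, hc₂⟩ := card_ne_zero_le_card_pair_ne_zero c₁ c₂
  -- excludes `N < E`, where `N - E` truncates to `0`
  have hN : #{n | (c₁ n, c₂ n) ≠ (0, 0)} ≤ N := by
    simpa using card_le_univ (α := Fin N) _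
  have hne : c₁ ≠ 0 ∨ c₂ ≠ 0 := by
    contrapose! hx
    rw [hx.1, hx.2, Sum.elim_zero_zero]
  rcases hne with hne | hne
  · have hw : N < N - E + #{n | c₁ n ≠ 0} := by
      simpa using hM₁.card_lt_add_card_ne_zero (v := x ∘ Sum.inl) hne
    omega
  · have hw : N < N - E + #{n | c₂ n ≠ 0} := by
      simpa using hM₂.card_lt_add_card_ne_zero (v := x ∘ Sum.inr) hne
    omega

/-- The block diagonal of two N×(N−E) MDS matrices has rank 2N−2E and its column span
has minimum symplectic weight at least E+1. -/
theorem stmt_11 (F : Type*) [Field F] [DecidableEq F] (N E : ℕ) (hE : E < N)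
    (M₁ M₂ : Matrix (Fin N) (Fin (N - E)) F)
    (h₁ : ∀ (S : Finset (Fin N)) (hS : S.card = N - E),
      IsUnit (M₁.submatrix (fun i : Fin (N - E) => ((S.orderIsoOfFin hS) i : Fin N)) id))
    (h₂ : ∀ (S : Finset (Fin N)) (hS : S.card = N - E),
      IsUnit (M₂.submatrix (fun i : Fin (N - E) => ((S.orderIsoOfFin hS) i : Fin N)) id)) :
    (Matrix.fromBlocks M₁ 0 0 M₂).rank = 2 * N - 2 * E ∧
    (∀ x : Fin (N - E) ⊕ Fin (N - E) → F,
      (Matrix.fromBlocks M₁ 0 0 M₂).mulVec x ≠ 0 →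
      E + 1 ≤ (Finset.univ.filter (fun n : Fin N =>
        ((Matrix.fromBlocks M₁ 0 0 M₂).mulVec x (Sum.inl n),
         (Matrix.fromBlocks M₁ 0 0 M₂).mulVec x (Sum.inr n)) ≠ (0, 0))).card) :=
  stmt_11_general F N E M₁ M₂ h₁ h₂
end

section
/- Let F be a field, α_1,...,α_N pairwise distinct in F, u_1,...,u_N and β_1,...,β_N nonzero, and v_n = (u_n ∏_{i≠n}(α_n − α_i))^{-1}. The generalized Reed–Solomon code generated by the columns {u_n α_n^{j−1} : j ∈ [k]} and the GRS code generated by {v_n α_n^{j−1} : j ∈ [N−k]} are orthogonal complements of each other in F^N (with respect to the standard bilinear form). -/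
/-!
For `m + 2 ≤ N`, the sum `∑ₙ αₙ ^ m / ∏_{i ≠ n} (αₙ - αᵢ)` is the coefficient of `X ^ (N - 1)` in
the Lagrange interpolant of `X ^ m` at the nodes `αₙ`, i.e. in `X ^ m` itself, so it vanishes. Since
`uₙ vₙ = 1 / ∏_{i ≠ n} (αₙ - αᵢ)`, every product of a column of the first generator matrix with one
of the second is such a sum, and the two codes are orthogonal. Both generator matrices are injective,
because a nonzero polynomial of degree `< N` cannot vanish at `N` distinct points, so the codes have
dimensions `k` and `N - k`; for the nondegenerate dot product this forces each to be the orthogonal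
complement of the other.
-/

open Polynomial Finset Matrix Module LinearMap.BilinForm

theorem Lagrange.sum_pow_mul_inv_prod_sub_eq_zero {F ι : Type*} [Field F] [DecidableEq ι]
    {s : Finset ι} {α : ι → F} (hα : Set.InjOn α s) {m : ℕ} (hm : m + 1 < #s) :
    ∑ i ∈ s, α i ^ m * (∏ j ∈ s.erase i, (α i - α j))⁻¹ = 0 := by
  have hdeg : (X ^ m : F[X]).degree < #s := by
    rw [degree_X_pow]
    exact_mod_cast (by omega : m < #s)
  have hcoeff := congrArg (coeff · (#s - 1)) (Lagrange.eq_interpolate hα hdeg)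
  simp only [coeff_X_pow, if_neg (by omega : #s - 1 ≠ m), Lagrange.interpolate_apply,
    finsetSum_coeff, coeff_C_mul] at hcoeff
  rw [hcoeff]
  refine Finset.sum_congr rfl fun i hi => ?_
  rw [eval_pow, eval_X, ← Lagrange.leadingCoeff_basis hα hi, leadingCoeff,
    Lagrange.natDegree_basis hα hi]

section DotProduct

variable {F ι : Type*} [Field F] [Fintype ι] [DecidableEq ι]

lemma Matrix.toBilin'_one_apply (x y : ι → F) : toBilin' (1 : Matrix ι ι F) x y = x ⬝ᵥ y := by
  rw [toBilin'_apply', one_mulVec]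

lemma Matrix.nondegenerate_toBilin'_one : (toBilin' (1 : Matrix ι ι F)).Nondegenerate :=
  (nondegenerate_of_det_ne_zero (by simp)).toBilin'

lemma Matrix.isRefl_toBilin'_one : (toBilin' (1 : Matrix ι ι F)).IsRefl := fun x y h => by
  rwa [toBilin'_one_apply, dotProduct_comm, ← toBilin'_one_apply]

end DotProduct

namespace GRS

variable {F ι : Type*} [Field F]

/-- Columns are indexed from `0`: column `j` carries `αₙ ^ j`, the paper's column `j + 1`. -/
def generatorMatrix (α u : ι → F) (k : ℕ) : Matrix ι (Fin k) F :=
  Matrix.of fun n j => u n * α n ^ (j : ℕ)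

def dualMultiplier [Fintype ι] [DecidableEq ι] (α u : ι → F) (n : ι) : F :=
  (u n * ∏ i ∈ univ.erase n, (α n - α i))⁻¹

lemma generatorMatrix_mulVec_apply (α u : ι → F) {k : ℕ} (c : Fin k → F) (n : ι) :
    (generatorMatrix α u k *ᵥ c) n = u n * ((degreeLTEquiv F k).symm c : F[X]).eval (α n) := by
  rw [eval_eq_sum_degreeLTEquiv (Submodule.coe_mem ((degreeLTEquiv F k).symm c)),
    Subtype.coe_eta, LinearEquiv.apply_symm_apply, mul_sum]
  simp only [mulVec, dotProduct, generatorMatrix, of_apply]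
  exact Finset.sum_congr rfl fun j _ => by ring

variable [Fintype ι] {α u : ι → F}

lemma injective_generatorMatrix_mulVecLin (hα : Function.Injective α) (hu : ∀ n, u n ≠ 0)
    {k : ℕ} (hk : k ≤ Fintype.card ι) : Function.Injective (generatorMatrix α u k).mulVecLin := by
  rw [← LinearMap.ker_eq_bot, LinearMap.ker_eq_bot']
  intro c hc
  have hp : ((degreeLTEquiv F k).symm c : F[X]) = 0 := by
    refine eq_zero_of_degree_lt_of_eval_index_eq_zero univ hα.injOn ?_ fun n _ => ?_
    · exact (mem_degreeLT.1 (Submodule.coe_mem _)).trans_le (by exact_mod_cast hk)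
    · simpa [generatorMatrix_mulVec_apply, hu n] using congrFun hc n
  simpa using congrArg (degreeLTEquiv F k) (Subtype.ext hp : (degreeLTEquiv F k).symm c = 0)

lemma finrank_range_generatorMatrix (hα : Function.Injective α) (hu : ∀ n, u n ≠ 0) {k : ℕ}
    (hk : k ≤ Fintype.card ι) :
    finrank F (LinearMap.range (generatorMatrix α u k).mulVecLin) = k := by
  rw [LinearMap.finrank_range_of_inj (injective_generatorMatrix_mulVecLin hα hu hk),
    finrank_fin_fun]

lemma generatorMatrix_mulVec_dotProduct (α u w : ι → F) {k l : ℕ} (c : Fin k → F)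
    (d : Fin l → F) :
    (generatorMatrix α u k *ᵥ c) ⬝ᵥ (generatorMatrix α w l *ᵥ d) =
      ∑ i, ∑ j, c i * d j * ∑ n, u n * w n * α n ^ ((i : ℕ) + j) := by
  simp only [dotProduct, mulVec, generatorMatrix, of_apply, Finset.sum_mul_sum]
  conv_rhs => simp only [Finset.mul_sum]; rw [Finset.sum_comm_cycle]
  refine Fintype.sum_congr _ _ fun n => Fintype.sum_congr _ _ fun i =>
    Fintype.sum_congr _ _ fun j => ?_
  rw [pow_add]
  ring

lemma generatorMatrix_mulVec_dotProduct_eq_zero {w : ι → F} {k l : ℕ}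
    (h : ∀ m, m + 2 ≤ k + l → ∑ n, u n * w n * α n ^ m = 0) (c : Fin k → F) (d : Fin l → F) :
    (generatorMatrix α u k *ᵥ c) ⬝ᵥ (generatorMatrix α w l *ᵥ d) = 0 := by
  rw [generatorMatrix_mulVec_dotProduct]
  refine Finset.sum_eq_zero fun i _ => Finset.sum_eq_zero fun j _ => ?_
  rw [h _ (by omega), mul_zero]

variable [DecidableEq ι]

lemma dualMultiplier_ne_zero (hα : Function.Injective α) (hu : ∀ n, u n ≠ 0) (n : ι) :
    dualMultiplier α u n ≠ 0 :=
  inv_ne_zero <| mul_ne_zero (hu n) <| prod_ne_zero_iff.2 fun _ hi =>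
    sub_ne_zero.2 <| hα.ne (ne_of_mem_erase hi).symm

lemma sum_mul_dualMultiplier_mul_pow_eq_zero (hα : Function.Injective α) (hu : ∀ n, u n ≠ 0)
    {m : ℕ} (hm : m + 1 < Fintype.card ι) :
    ∑ n, u n * dualMultiplier α u n * α n ^ m = 0 := by
  rw [← Lagrange.sum_pow_mul_inv_prod_sub_eq_zero hα.injOn hm]
  refine Finset.sum_congr rfl fun n _ => ?_
  rw [dualMultiplier, mul_inv, ← mul_assoc, mul_inv_cancel₀ (hu n), one_mul, mul_comm]

theorem range_dual_eq_orthogonal (hα : Function.Injective α) (hu : ∀ n, u n ≠ 0) {k l : ℕ}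
    (hkl : k + l = Fintype.card ι) :
    LinearMap.range (generatorMatrix α (dualMultiplier α u) l).mulVecLin =
      (toBilin' (1 : Matrix ι ι F)).orthogonal
        (LinearMap.range (generatorMatrix α u k).mulVecLin) := by
  refine Submodule.eq_of_le_of_finrank_le ?_ ?_
  · rintro _ ⟨d, rfl⟩
    refine mem_orthogonal_iff.2 ?_
    rintro _ ⟨c, rfl⟩
    rw [mulVecLin_apply, mulVecLin_apply, toBilin'_one_apply]
    exact generatorMatrix_mulVec_dotProduct_eq_zero
      (fun m hm => sum_mul_dualMultiplier_mul_pow_eq_zero hα hu (by omega)) c d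
  · rw [finrank_orthogonal nondegenerate_toBilin'_one, finrank_fintype_fun_eq_card,
      finrank_range_generatorMatrix hα hu (by omega),
      finrank_range_generatorMatrix hα (dualMultiplier_ne_zero hα hu) (by omega)]
    omega

end GRS

theorem stmt_13_general (F : Type*) [Field F] (N k : ℕ) (hkN : k ≤ N - 1)
    (α : Fin N → F) (hα : Function.Injective α)
    (u : Fin N → F) (hu : ∀ n, u n ≠ 0)
    (v : Fin N → F)
    (hv : ∀ n, v n = (u n * ∏ i ∈ Finset.univ.erase n, (α n - α i))⁻¹)
    (G₁ : Matrix (Fin N) (Fin k) F) (G₂ : Matrix (Fin N) (Fin (N - k)) F)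
    (hG₁ : ∀ n j, G₁ n j = u n * (α n) ^ (j : ℕ))
    (hG₂ : ∀ n j, G₂ n j = v n * (α n) ^ (j : ℕ)) :
    (∀ y : Fin N → F,
      y ∈ LinearMap.range G₂.mulVecLin ↔
        ∀ x ∈ LinearMap.range G₁.mulVecLin, ∑ n, x n * y n = 0) ∧
    (∀ x : Fin N → F,
      x ∈ LinearMap.range G₁.mulVecLin ↔
        ∀ y ∈ LinearMap.range G₂.mulVecLin, ∑ n, x n * y n = 0) := by
  obtain rfl : v = GRS.dualMultiplier α u := funext hv
  obtain rfl : G₁ = GRS.generatorMatrix α u k := Matrix.ext hG₁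
  obtain rfl : G₂ = GRS.generatorMatrix α (GRS.dualMultiplier α u) (N - k) := Matrix.ext hG₂
  have hdual := GRS.range_dual_eq_orthogonal (k := k) (l := N - k) hα hu
    (by rw [Fintype.card_fin]; omega)
  refine ⟨fun y => ?_, fun x => ?_⟩
  · simp only [hdual, mem_orthogonal_iff, toBilin'_one_apply]
    rfl
  · rw [← orthogonal_orthogonal nondegenerate_toBilin'_one isRefl_toBilin'_one
      (LinearMap.range _), ← hdual, mem_orthogonal_iff]
    simp only [toBilin'_one_apply, dotProduct_comm _ x]
    rfl

/-- GRS_k(α,u) and GRS_{N−k}(α,v) with v the dual multipliers are orthogonal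
complements of each other for the standard bilinear form. -/
theorem stmt_13 (F : Type*) [Field F] (N k : ℕ) (hk : 1 ≤ k) (hkN : k ≤ N - 1)
    (α : Fin N → F) (hα : Function.Injective α)
    (u : Fin N → F) (hu : ∀ n, u n ≠ 0)
    (v : Fin N → F)
    (hv : ∀ n, v n = (u n * ∏ i ∈ Finset.univ.erase n, (α n - α i))⁻¹)
    (G₁ : Matrix (Fin N) (Fin k) F) (G₂ : Matrix (Fin N) (Fin (N - k)) F)
    (hG₁ : ∀ n j, G₁ n j = u n * (α n) ^ (j : ℕ))
    (hG₂ : ∀ n j, G₂ n j = v n * (α n) ^ (j : ℕ)) :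
    (∀ y : Fin N → F,
      y ∈ LinearMap.range G₂.mulVecLin ↔
        ∀ x ∈ LinearMap.range G₁.mulVecLin, ∑ n, x n * y n = 0) ∧
    (∀ x : Fin N → F,
      x ∈ LinearMap.range G₁.mulVecLin ↔
        ∀ y ∈ LinearMap.range G₂.mulVecLin, ∑ n, x n * y n = 0) :=
  stmt_13_general F N k hkN α hα u hu v hv G₁ G₂ hG₁ hG₂
end
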